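/- For every odd n ≥ 3, there exists a unitary U ∈ U(ℂ^n ⊗ ℂ^n) with operator Schmidt rank Ω(U) = n + 1. -/

import Mathlib

/-
The unitary is a permutation matrix, the product of two controlled shifts: shift the first
factor by `b mod l`, controlled by the basis state `b` of the second, then shift the second
factor by `c mod k`, controlled by the basis state `c` of the first. Its realignment has a `1`
at `((a, c), (b, d))` exactly when `c = a + (b mod l)` and `d = b + (c mod k)`. This matrix
factors through the `k l` residue pairs `(c mod k, b mod l)`, so its rank is at most `k l`,
and it contains a `k l × k l` identity submatrix, so its rank is at least `k l`. For odd `n`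
take `k = (n + 1) / 2` and `l = 2`.
-/

open Matrix Kronecker

/-- The realignment (reshuffling) of a bipartite operator. -/
def realign {n m : ℕ} (X : Matrix (Fin n × Fin m) (Fin n × Fin m) ℂ) :
    Matrix (Fin n × Fin n) (Fin m × Fin m) ℂ :=
  Matrix.of fun p q => X (p.1, q.1) (p.2, q.2)

/-- The operator Schmidt rank of a bipartite operator, i.e. the rank
of its realignment. -/
noncomputable def osr {n m : ℕ} (X : Matrix (Fin n × Fin m) (Fin n × Fin m) ℂ) : ℕ :=
  (realign X).rank

theorem Matrix.rank_eq_card_of_eq_mul_of_submatrix_eq_one {R m m' ι : Type*} [CommSemiring R]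
    [StrongRankCondition R] [Fintype m'] [Fintype ι] [DecidableEq ι] {M : Matrix m m' R}
    {W : Matrix m ι R} {C : Matrix ι m' R} (hM : M = W * C) {r : ι → m} {c : ι → m'}
    (hrc : M.submatrix r c = 1) : M.rank = Fintype.card ι := by
  refine le_antisymm ?_ ?_
  · calc M.rank ≤ C.rank := hM ▸ rank_mul_le_right W C
      _ ≤ Fintype.card ι := rank_le_card_height C
  · calc Fintype.card ι = (M.submatrix r c).rank := by rw [hrc, rank_one]
      _ ≤ M.rank := rank_submatrix_le M r c

theorem Matrix.permMatrix_mem_unitaryGroup {n R : Type*} [DecidableEq n] [Fintype n]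
    [CommRing R] [StarRing R] (σ : Equiv.Perm n) : σ.permMatrix R ∈ unitaryGroup n R := by
  rw [mem_unitaryGroup_iff', star_eq_conjTranspose, conjTranspose_permMatrix,
    ← permMatrix_mul, mul_inv_cancel, permMatrix_one]

theorem realign_permMatrix_apply {n m : ℕ} (σ : Equiv.Perm (Fin n × Fin m)) (a c : Fin n)
    (b d : Fin m) :
    realign (σ.permMatrix ℂ) (a, c) (b, d) = if σ (a, b) = (c, d) then 1 else 0 := by
  simp [realign, PEquiv.toMatrix_apply]

namespace ProductShift

variable {n : ℕ} [NeZero n]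

def controlledShift (s t : Fin n → Fin n) : Equiv.Perm (Fin n × Fin n) where
  toFun p := (p.1 + s p.2, p.2 + t (p.1 + s p.2))
  invFun q := (q.1 - s (q.2 - t q.1), q.2 - t q.1)
  left_inv p := by simp
  right_inv q := by simp

theorem controlledShift_apply_eq_iff (s t : Fin n → Fin n) (a b c d : Fin n) :
    controlledShift s t (a, b) = (c, d) ↔ a + s b = c ∧ b + t c = d := by
  simp only [controlledShift, Equiv.coe_fn_mk, Prod.mk.injEq]
  constructor <;> rintro ⟨rfl, rfl⟩ <;> exact ⟨rfl, rfl⟩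

variable (k l : ℕ) [NeZero k] [NeZero l] (hk : k ≤ n) (hl : l ≤ n)

def residueShift : Equiv.Perm (Fin n × Fin n) :=
  controlledShift (fun b => Fin.castLE hl (Fin.ofNat l b)) (fun c => Fin.castLE hk (Fin.ofNat k c))

def leftFactor : Matrix (Fin n × Fin n) (Fin k × Fin l) ℂ :=
  Matrix.of fun p i => if p.1 + Fin.castLE hl i.2 = p.2 ∧ Fin.ofNat k p.2 = i.1 then 1 else 0

def rightFactor : Matrix (Fin k × Fin l) (Fin n × Fin n) ℂ :=
  Matrix.of fun i q => if Fin.ofNat l q.1 = i.2 ∧ q.1 + Fin.castLE hk i.1 = q.2 then 1 else 0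

theorem realign_residueShift_eq_mul :
    realign ((residueShift k l hk hl).permMatrix ℂ) = leftFactor k l hl * rightFactor k l hk := by
  ext ⟨a, c⟩ ⟨b, d⟩
  rw [mul_apply, Finset.sum_eq_single (Fin.ofNat k c, Fin.ofNat l b)]
  · simp only [realign_permMatrix_apply, residueShift, controlledShift_apply_eq_iff, leftFactor,
      rightFactor, of_apply, ite_and, ite_true, ite_mul, one_mul, zero_mul]
  · rintro ⟨i, j⟩ - hij
    simp only [leftFactor, rightFactor, of_apply, mul_ite, ite_mul, one_mul, zero_mul, mul_zero]
    split_ifs <;> simp_all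
  · simp

theorem realign_residueShift_submatrix :
    (realign ((residueShift k l hk hl).permMatrix ℂ)).submatrix
      (fun i : Fin k × Fin l => (Fin.castLE hk i.1 - Fin.castLE hl i.2, Fin.castLE hk i.1))
      (fun i : Fin k × Fin l => (Fin.castLE hl i.2, Fin.castLE hl i.2 + Fin.castLE hk i.1)) = 1 := by
  ext ⟨i, j⟩ ⟨i', j'⟩
  simp only [submatrix_apply, realign_permMatrix_apply, residueShift, controlledShift_apply_eq_iff,
    one_apply, Fin.val_castLE, Fin.ofNat_val_eq_self, Prod.mk.injEq]
  congr 1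
  rw [sub_add_eq_add_sub, sub_eq_iff_eq_add, add_right_inj, add_right_inj, Fin.castLE_inj,
    Fin.castLE_inj, and_comm, eq_comm (a := j)]

theorem osr_residueShift : osr ((residueShift k l hk hl).permMatrix ℂ) = k * l := by
  rw [osr, rank_eq_card_of_eq_mul_of_submatrix_eq_one (realign_residueShift_eq_mul k l hk hl)
    (realign_residueShift_submatrix k l hk hl), Fintype.card_prod, Fintype.card_fin,
    Fintype.card_fin]

end ProductShift

theorem exists_mem_unitaryGroup_osr_eq_mul {n k l : ℕ} [NeZero k] [NeZero l] (hk : k ≤ n)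
    (hl : l ≤ n) : ∃ U ∈ unitaryGroup (Fin n × Fin n) ℂ, osr U = k * l :=
  have : NeZero n := .of_pos ((Nat.pos_of_neZero k).trans_le hk)
  ⟨_, permMatrix_mem_unitaryGroup _, ProductShift.osr_residueShift k l hk hl⟩

/-- For every odd `n ≥ 3` there is a unitary on `ℂ^n ⊗ ℂ^n` with operator
Schmidt rank `n + 1`. -/
theorem stmt14 (n : ℕ) (hodd : Odd n) (hn : 3 ≤ n) :
    ∃ U ∈ Matrix.unitaryGroup (Fin n × Fin n) ℂ, osr U = n + 1 := by
  obtain ⟨m, rfl⟩ := hodd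
  have h := exists_mem_unitaryGroup_osr_eq_mul (n := 2 * m + 1) (k := m + 1) (l := 2)
    (by omega) (by omega)
  rwa [show (m + 1) * 2 = 2 * m + 1 + 1 by ring] at h
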